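/- arXiv:2605.25316 — 2 statements merged into one kernel-verified Lean document; each statement's English description precedes it below -/
import Mathlib

section
/- Fix an integer j′ ≥ 1, a prior existence weight b ≥ 0, a clutter intensity value λ ≥ 0, and nonnegative likelihood values s_1,…,s_{j′}. Define the existence factor F on ε ∈ {0,1} by F(1) = b, F(0) = 1; for j < j′ define S_j(1,1) = s_j, S_j(1,0) = 1, S_j(0,0) = 1, S_j(0,1) = 0; and for the component's own measurement define S_{j′}(1,1) = s_{j′}, S_{j′}(1,0) = 0, S_{j′}(0,1) = λ, S_{j′}(0,0) = 1. Then for every α = (α_1,…,α_{j′}) ∈ {0,1}^{j′}, writing A = {j : α_j = 1}: ∑_{ε∈{0,1}} F(ε)·∏_{j=1}^{j′} S_j(ε, α_j) equals 1 if A = ∅; equals 0 if A ≠ ∅ and j′ ∉ A; and equals (λ if A = {j′} else 0) + b·∏_{j∈A} s_j if j′ ∈ A. Hence marginalizing the existence variable in the factorized model for a new Bernoulli component reproduces exactly the local hypothesis weights: weight 1 for non-existence, weight 0 for any association not containing the component's own measurement, and weight δ_1[|A|]·λ + b∏_{j∈A}s_j for a detection with measurement subset A containing the own measurement. -/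
/-!
Summing out the existence variable leaves two products. If the component exists, every
associated measurement contributes `s_j`, every unassociated one `1`, except that the own
measurement must be associated; so this term is `b · ∏_{j ∈ A} s_j` when `j′ ∈ A` and `0`
otherwise. If it does not exist, only the own measurement may be associated (as clutter),
so this term is `1` for `A = ∅`, `λ` for `A = {j′}` and `0` otherwise.
-/

open Finset

section
variable {ι R : Type*} [DecidableEq ι] [CommMonoidWithZero R]

theorem Finset.prod_ite_eq_zero (A : Finset ι) (k : ι) (c : R) :
    ∏ j ∈ A, (if j = k then c else 0) = if A = ∅ then 1 else if A = {k} then c else 0 := by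
  split_ifs with hempty hsingle
  · simp [hempty]
  · simp [hsingle]
  · obtain ⟨j, hjA, hjk⟩ : ∃ j ∈ A, j ≠ k := by
      by_contra! h
      exact (subset_singleton_iff.1 fun j hj => mem_singleton.2 (h j hj)).elim hempty hsingle
    exact prod_eq_zero hjA (if_neg hjk)

variable {t : Finset ι} {k : ι} (α : ι → Bool)

theorem prod_likelihoods_of_exists (hk : k ∈ t) (s : ι → R) :
    ∏ j ∈ t, (if j = k then (if α j then s j else 0) else (if α j then s j else 1)) =
      if k ∈ t.filter (α · = true) then ∏ j ∈ t.filter (α · = true), s j else 0 := by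
  split_ifs with hkA
  · have hαk : α k = true := (mem_filter.1 hkA).2
    rw [prod_filter]
    refine prod_congr rfl fun j _ => ?_
    by_cases hj : j = k
    · simp [hj, hαk]
    · simp [hj]
  · have hαk : α k = false := by simpa [hk] using hkA
    exact prod_eq_zero hk (by simp [hαk])

theorem prod_likelihoods_of_not_exists (lam : R) :
    ∏ j ∈ t, (if j = k then (if α j then lam else 1) else (if α j then 0 else 1)) =
      if t.filter (α · = true) = ∅ then 1
      else if t.filter (α · = true) = {k} then lam else 0 := by
  rw [← prod_ite_eq_zero, prod_filter]
  refine prod_congr rfl fun j _ => ?_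
  by_cases hj : j = k <;> cases α j <;> simp [hj]

end

theorem new_component_marginalization_general (j' : ℕ) (hj' : 1 ≤ j') (b lam : ℝ)
    (s : ℕ → ℝ) (α : ℕ → Bool) :
    (∑ ε : Bool, (if ε then b else 1) *
        ∏ j ∈ Finset.Icc 1 j',
          (if j = j' then
            (if ε then (if α j then s j else 0) else (if α j then lam else 1))
          else
            (if α j then (if ε then s j else 0) else 1))) =
      if ((Finset.Icc 1 j').filter fun j => α j = true) = ∅ then 1
      else if j' ∈ (Finset.Icc 1 j').filter fun j => α j = true then
        (if ((Finset.Icc 1 j').filter fun j => α j = true) = {j'} then lam else 0) +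
          b * ∏ j ∈ (Finset.Icc 1 j').filter (fun j => α j = true), s j
      else 0 := by
  have hj'mem : j' ∈ Finset.Icc 1 j' := mem_Icc.2 ⟨hj', le_rfl⟩
  simp only [Fintype.sum_bool, if_true, Bool.false_eq_true, if_false]
  rw [prod_likelihoods_of_exists α hj'mem, prod_likelihoods_of_not_exists α]
  split_ifs <;> simp_all [add_comm]

/-- Marginalizing the existence variable of a new Bernoulli component (created by its
own measurement `j′`) in the factorized model reproduces exactly the local hypothesis
weights: weight `1` for non-existence (`A = ∅`), weight `0` for any association not
containing the own measurement, and weight `δ_1[|A|]·λ + b·∏_{j∈A} s_j` for a detection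
with measurement subset `A ∋ j′`. Here the existence factor is `F(1) = b, F(0) = 1`;
for `j < j′` the likelihood factor is `S_j(1,1) = s_j, S_j(1,0) = 1, S_j(0,0) = 1,
S_j(0,1) = 0`; and for the own measurement `S_{j′}(1,1) = s_{j′}, S_{j′}(1,0) = 0,
S_{j′}(0,1) = λ, S_{j′}(0,0) = 1`. -/
theorem new_component_marginalization (j' : ℕ) (hj' : 1 ≤ j') (b lam : ℝ)
    (hb : 0 ≤ b) (hlam : 0 ≤ lam)
    (s : ℕ → ℝ) (hs : ∀ j ∈ Finset.Icc 1 j', 0 ≤ s j) (α : ℕ → Bool) :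
    (∑ ε : Bool, (if ε then b else 1) *
        ∏ j ∈ Finset.Icc 1 j',
          (if j = j' then
            (if ε then (if α j then s j else 0) else (if α j then lam else 1))
          else
            (if α j then (if ε then s j else 0) else 1))) =
      if ((Finset.Icc 1 j').filter fun j => α j = true) = ∅ then 1
      else if j' ∈ (Finset.Icc 1 j').filter fun j => α j = true then
        (if ((Finset.Icc 1 j').filter fun j => α j = true) = {j'} then lam else 0) +
          b * ∏ j ∈ (Finset.Icc 1 j').filter (fun j => α j = true), s j
      else 0 :=
  new_component_marginalization_general j' hj' b lam s α
end

section
/- Fix integers n, m ≥ 1 and, for each i ∈ {1,…,n}, reals b_i ≥ 0, p_i ∈ [0,1], γ_i ≥ 0 and s_{i,j} ≥ 0 for j ∈ {1,…,m}. For a subset A ⊆ {1,…,m} define the local-hypothesis weight G_i(A) = b_i·(1 − p_i + p_i·exp(−γ_i)) if A = ∅ and G_i(A) = b_i·p_i·exp(−γ_i)·∏_{j∈A} s_{i,j} if A ≠ ∅. Set c_i(1) = p_i·exp(−γ_i) and c_i(0) = 1 − p_i. Then ∑_{β : {1,…,m} → {1,…,n}} ∏_{i=1}^{n} G_i(β^{−1}({i}))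 = ∑_{α ∈ {0,1}^{n×m}} ∑_{β : {1,…,m} → {1,…,n}} ∑_{D ∈ {0,1}^{n}} ∏_{i=1}^{n} [ b_i · c_i(D_i) · ∏_{j=1}^{m} Φ(D_i, α_{i,j}) · (s_{i,j} if α_{i,j} = 1 else 1) ] · ∏_{i=1}^{n} ∏_{j=1}^{m} Ψ^{i,j}(α_{i,j}, β_j). That is, the sum over global association hypotheses of the products of local hypothesis weights equals the sum of the factorized joint model over detection variables, object-oriented association variables, and measurement-oriented association variables. -/
open scoped BigOperators

/-- The detection consistency factor `Φ(D,a)`: equal to `1` if `D = 1` or `a = 0`,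
and `0` otherwise. -/
def Phi (D a : Bool) : ℝ := if D = true ∨ a = false then 1 else 0

/-- The association consistency factor `Ψ^{i,j}(a,b)`: equal to `1` if
(`a = 1` and `b = i`) or (`a = 0` and `b ≠ i`), and `0` otherwise. -/
def PsiF {n : ℕ} (i : Fin n) (a : Bool) (b : Fin n) : ℝ :=
  if (a = true ∧ b = i) ∨ (a = false ∧ b ≠ i) then 1 else 0

/-!
The Ψ factors multiply to the indicator of `α i j = decide (β j = i)`, so for each `β` the sum
over `α` collapses to the association matrix of `β`. The remaining sum over `D` of a product over
objects is a product over objects of sums over `D i`: `D i = 1` contributes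
`b p e^{-γ} ∏_{j ∈ β⁻¹(i)} s`, and `D i = 0` contributes `b (1 - p)` exactly when `β⁻¹(i) = ∅`,
since `Φ(0, 1) = 0`.
-/

open Finset

lemma psiF_eq_ite {n : ℕ} (i : Fin n) (a : Bool) (b : Fin n) :
    PsiF i a b = if a = decide (b = i) then 1 else 0 := by
  by_cases h : b = i <;> cases a <;> simp [PsiF, h]

lemma prod_prod_psiF_eq_ite {n m : ℕ} (α : Fin n → Fin m → Bool) (β : Fin m → Fin n) :
    ∏ i, ∏ j, PsiF i (α i j) (β j) = if α = fun i j => decide (β j = i) then 1 else 0 := by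
  simp only [psiF_eq_ite, prod_ite_zero, prod_const_one, mem_univ, true_implies, funext_iff]

section Detection

variable {ι : Type*} [Fintype ι] (P : ι → Prop) [DecidablePred P] (s : ι → ℝ)

lemma prod_phi_true_mul :
    ∏ j, Phi true (decide (P j)) * (if decide (P j) then s j else 1) =
      ∏ j ∈ univ.filter P, s j := by
  simp [Phi, prod_filter]

lemma prod_phi_false_mul [DecidableEq ι] :
    ∏ j, Phi false (decide (P j)) * (if decide (P j) then s j else 1) =
      if univ.filter P = ∅ then 1 else 0 := by
  have factor_eq (j : ι) :
      Phi false (decide (P j)) * (if decide (P j) then s j else 1) = if ¬ P j then 1 else 0 := by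
    by_cases h : P j <;> simp [Phi, h]
  simp only [factor_eq, prod_ite_zero, prod_const_one, filter_eq_empty_iff, mem_univ,
    true_implies]

lemma sum_bool_mul_prod_phi [DecidableEq ι] (b q r : ℝ) :
    ∑ d : Bool, b * (if d then q else r) *
        ∏ j, Phi d (decide (P j)) * (if decide (P j) then s j else 1) =
      if univ.filter P = ∅ then b * (r + q) else b * q * ∏ j ∈ univ.filter P, s j := by
  rw [Fintype.sum_bool]
  simp only [if_true, Bool.false_eq_true, if_false, prod_phi_true_mul, prod_phi_false_mul]
  split_ifs with h
  · rw [h, prod_empty]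
    ring
  · ring

end Detection

theorem global_hypothesis_factorization_general (n m : ℕ)
    (b p γ : Fin n → ℝ) (s : Fin n → Fin m → ℝ) :
    (∑ β : Fin m → Fin n, ∏ i : Fin n,
        (if (Finset.univ.filter fun j => β j = i) = ∅ then
          b i * (1 - p i + p i * Real.exp (-γ i))
        else
          b i * (p i * Real.exp (-γ i)) *
            ∏ j ∈ Finset.univ.filter (fun j => β j = i), s i j)) =
      ∑ α : Fin n → Fin m → Bool, ∑ β : Fin m → Fin n, ∑ D : Fin n → Bool,
        (∏ i : Fin n, b i * (if D i then p i * Real.exp (-γ i) else 1 - p i) *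
            ∏ j : Fin m, Phi (D i) (α i j) * (if α i j then s i j else 1)) *
          ∏ i : Fin n, ∏ j : Fin m, PsiF i (α i j) (β j) := by
  rw [sum_comm]
  refine sum_congr rfl fun β _ => ?_
  simp_rw [prod_prod_psiF_eq_ite, mul_boole]
  rw [sum_comm]
  simp only [Fintype.sum_ite_eq']
  refine (prod_congr rfl fun i _ => (sum_bool_mul_prod_phi _ (s i) _ _ _).symm).trans ?_
  exact Fintype.prod_sum _

/-- The sum over global association hypotheses `β : {1,…,m} → {1,…,n}` of the products
of the unnormalized ZIP local hypothesis weights `G_i(β⁻¹({i}))` equals the sum of the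
factorized joint model over detection variables `D`, object-oriented association
variables `α`, and measurement-oriented association variables `β`. -/
theorem global_hypothesis_factorization (n m : ℕ) (hn : 1 ≤ n) (hm : 1 ≤ m)
    (b p γ : Fin n → ℝ) (s : Fin n → Fin m → ℝ)
    (hb : ∀ i, 0 ≤ b i) (hp : ∀ i, p i ∈ Set.Icc (0 : ℝ) 1)
    (hγ : ∀ i, 0 ≤ γ i) (hs : ∀ i j, 0 ≤ s i j) :
    (∑ β : Fin m → Fin n, ∏ i : Fin n,
        (if (Finset.univ.filter fun j => β j = i) = ∅ then
          b i * (1 - p i + p i * Real.exp (-γ i))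
        else
          b i * (p i * Real.exp (-γ i)) *
            ∏ j ∈ Finset.univ.filter (fun j => β j = i), s i j)) =
      ∑ α : Fin n → Fin m → Bool, ∑ β : Fin m → Fin n, ∑ D : Fin n → Bool,
        (∏ i : Fin n, b i * (if D i then p i * Real.exp (-γ i) else 1 - p i) *
            ∏ j : Fin m, Phi (D i) (α i j) * (if α i j then s i j else 1)) *
          ∏ i : Fin n, ∏ j : Fin m, PsiF i (α i j) (β j) :=
  global_hypothesis_factorization_general n m b p γ s
end
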